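/- arXiv:2603.01698 — 3 statements merged into one kernel-verified Lean document; each statement's English description precedes it below -/
import Mathlib

section
/- Let X be a compact metric space and k a universal kernel on X (its RKHS H is dense in C(X) with the supremum norm). If the mean embeddings of two Borel probability measures P and Q on X coincide, μ_P = μ_Q, then P = Q. -/
/-!
Pairing with `f ∈ H` commutes with integration, so `μ_P = μ_Q` says that `P` and `Q` integrate
every function `x ↦ ⟪f, φ x⟫` to the same value. On a compact space, integration against a finite
measure is continuous on `C(X, ℝ)`, so the integrals then agree on the closure of these functions,
which is all of `C(X, ℝ)`; and a finite Borel measure is determined by its integrals of bounded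
continuous functions.
-/

open MeasureTheory
open scoped RealInnerProductSpace

section CompactSpace

variable {X : Type*} [TopologicalSpace X] [CompactSpace X] [MeasurableSpace X] [BorelSpace X]

theorem Continuous.integrable_of_compactSpace {E : Type*} [NormedAddCommGroup E] {f : X → E}
    (hf : Continuous f) (μ : Measure X) [IsFiniteMeasure μ] : Integrable f μ :=
  hf.integrable_of_hasCompactSupport (HasCompactSupport.of_compactSpace f)

theorem MeasureTheory.continuous_integral_continuousMap {E : Type*} [NormedAddCommGroup E]
    [NormedSpace ℝ E] [SecondCountableTopologyEither X E] (μ : Measure X) [IsFiniteMeasure μ] :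
    Continuous fun g : C(X, E) => ∫ x, g x ∂μ :=
  (continuous_integral.comp (ContinuousMap.toLp 1 μ ℝ).continuous).congr fun g =>
    integral_congr_ae (ContinuousMap.coeFn_toLp μ g)

theorem MeasureTheory.Measure.ext_of_denseRange_integral_eq [HasOuterApproxClosed X]
    {ι : Type*} {F : ι → C(X, ℝ)} (hF : DenseRange F) {μ ν : Measure X}
    [IsFiniteMeasure μ] [IsFiniteMeasure ν] (h : ∀ i, ∫ x, F i x ∂μ = ∫ x, F i x ∂ν) :
    μ = ν := by
  have h_eq := hF.equalizer (continuous_integral_continuousMap μ)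
    (continuous_integral_continuousMap ν) (funext h)
  exact ext_of_forall_integral_eq_of_IsFiniteMeasure fun f => congrFun h_eq f.toContinuousMap

end CompactSpace

/-- For a universal kernel (RKHS dense in `C(X)` for the sup norm) on a compact metric
space, equality of mean embeddings implies equality of the Borel probability measures. -/
theorem stmt_2 {X : Type*} [MetricSpace X] [CompactSpace X]
    [MeasurableSpace X] [BorelSpace X]
    {H : Type*} [NormedAddCommGroup H] [InnerProductSpace ℝ H] [CompleteSpace H]
    (φ : X → H) (hφ : Continuous φ)
    (hdense : DenseRange (fun f : H =>
      (⟨fun x => ⟪f, φ x⟫, (continuous_const.inner hφ)⟩ : C(X, ℝ))))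
    (P Q : Measure X) [IsProbabilityMeasure P] [IsProbabilityMeasure Q]
    (h : (∫ x, φ x ∂P) = ∫ x, φ x ∂Q) :
    P = Q := by
  refine Measure.ext_of_denseRange_integral_eq hdense fun f => ?_
  simp only [ContinuousMap.coe_mk]
  rw [integral_inner (hφ.integrable_of_compactSpace P),
    integral_inner (hφ.integrable_of_compactSpace Q), h]
end

section
/- Fix α ∈ (0,1), a finite nonnegative measure μ on ℝ^d, and probability measures P, Q on ℝ^d with characteristic functions written in polar form φ_P(t) = a(t)e^{iθ_P(t)}, φ_Q(t) = b(t)e^{iθ_Q(t)}. Define d(P,Q) = ∫ [α·(a(t)−b(t))² + 2(1−α)·a(t)b(t)(1 − cos(θ_P(t)−θ_Q(t)))] dμ(t). If μ has strictly positive Lebesgue density and d(P,Q) = 0, then P = Q. -/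
open MeasureTheory
open scoped RealInnerProductSpace

/-
The discrepancy dominates `min α (1 - α) · |φ_P - φ_Q|²`, since
`|a e^{iθ} - b e^{iθ'}|² = (a - b)² + 2ab(1 - cos(θ - θ'))` and both summands are nonnegative.
The minorant is continuous, so its vanishing integral against a measure charging every open set
forces `φ_P = φ_Q` everywhere, and characteristic functions determine finite measures.
-/

lemma norm_ofReal_mul_exp_sub_sq (A B s t : ℝ) :
    ‖(A : ℂ) * Complex.exp (Complex.I * s) - (B : ℂ) * Complex.exp (Complex.I * t)‖ ^ 2
      = (A - B) ^ 2 + 2 * A * B * (1 - Real.cos (s - t)) := by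
  rw [mul_comm Complex.I (s : ℂ), mul_comm Complex.I (t : ℂ), Complex.sq_norm,
    Complex.normSq_apply]
  simp only [Complex.sub_re, Complex.sub_im, Complex.mul_re, Complex.mul_im,
    Complex.ofReal_re, Complex.ofReal_im, Complex.exp_ofReal_mul_I_re,
    Complex.exp_ofReal_mul_I_im, Real.cos_sub]
  linear_combination A ^ 2 * Real.cos_sq_add_sin_sq s + B ^ 2 * Real.cos_sq_add_sin_sq t

lemma min_mul_norm_ofReal_mul_exp_sub_sq_le {A B : ℝ} (hA : 0 ≤ A) (hB : 0 ≤ B) (α s t : ℝ) :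
    min α (1 - α) *
        ‖(A : ℂ) * Complex.exp (Complex.I * s) - (B : ℂ) * Complex.exp (Complex.I * t)‖ ^ 2
      ≤ α * (A - B) ^ 2 + 2 * (1 - α) * A * B * (1 - Real.cos (s - t)) := by
  rw [norm_ofReal_mul_exp_sub_sq]
  have hAB : 0 ≤ A * B * (1 - Real.cos (s - t)) :=
    mul_nonneg (mul_nonneg hA hB) (sub_nonneg.2 (Real.cos_le_one _))
  nlinarith [min_le_left α (1 - α), min_le_right α (1 - α), sq_nonneg (A - B)]

lemma Continuous.lintegral_eq_zero_iff {X : Type*} [TopologicalSpace X] [MeasurableSpace X]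
    [OpensMeasurableSpace X] (μ : Measure X) [μ.IsOpenPosMeasure] {f : X → ENNReal}
    (hf : Continuous f) : ∫⁻ x, f x ∂μ = 0 ↔ f = 0 := by
  rw [MeasureTheory.lintegral_eq_zero_iff hf.measurable, hf.ae_eq_iff_eq μ continuous_zero]

lemma isOpenPosMeasure_withDensity_ofReal {X : Type*} [TopologicalSpace X] [MeasurableSpace X]
    (μ : Measure X) [μ.IsOpenPosMeasure] {p : X → ℝ} (hp : ∀ x, 0 < p x) (hpm : Measurable p) :
    (μ.withDensity fun x => ENNReal.ofReal (p x)).IsOpenPosMeasure :=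
  (withDensity_absolutelyContinuous' hpm.ennreal_ofReal.aemeasurable
    (.of_forall fun x => ENNReal.ofReal_pos.2 (hp x) |>.ne')).isOpenPosMeasure

lemma charFun_eq_integral_exp_I_mul {E : Type*} [NormedAddCommGroup E] [InnerProductSpace ℝ E]
    [MeasurableSpace E] (P : Measure E) (t : E) :
    charFun P t = ∫ x, Complex.exp (Complex.I * (⟪t, x⟫ : ℝ)) ∂P := by
  simp only [charFun_apply, real_inner_comm t, mul_comm Complex.I]

/-- Class-aware amplitude–phase discrepancy: if the weighted amplitude–phase
discrepancy between the characteristic functions of `P` and `Q` (in polar form)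
vanishes, and the spectral measure has strictly positive Lebesgue density, then
`P = Q`. -/
theorem stmt_14 {d : ℕ} (α : ℝ) (hα : α ∈ Set.Ioo (0 : ℝ) 1)
    (p : EuclideanSpace ℝ (Fin d) → ℝ) (hp : ∀ t, 0 < p t) (hpm : Measurable p)
    (μ : Measure (EuclideanSpace ℝ (Fin d)))
    (hμ : μ = volume.withDensity (fun t => ENNReal.ofReal (p t)))
    (P Q : Measure (EuclideanSpace ℝ (Fin d)))
    [IsProbabilityMeasure P] [IsProbabilityMeasure Q]
    (a b θP θQ : EuclideanSpace ℝ (Fin d) → ℝ)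
    (ha0 : ∀ t, 0 ≤ a t) (hb0 : ∀ t, 0 ≤ b t)
    (haP : ∀ t, (∫ x, Complex.exp (Complex.I * (⟪t, x⟫ : ℝ)) ∂P) =
      (a t : ℂ) * Complex.exp (Complex.I * (θP t : ℝ)))
    (hbQ : ∀ t, (∫ x, Complex.exp (Complex.I * (⟪t, x⟫ : ℝ)) ∂Q) =
      (b t : ℂ) * Complex.exp (Complex.I * (θQ t : ℝ)))
    (hzero : (∫⁻ t, ENNReal.ofReal
        (α * (a t - b t) ^ 2 +
          2 * (1 - α) * a t * b t * (1 - Real.cos (θP t - θQ t))) ∂μ) = 0) :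
    P = Q := by
  set c := min α (1 - α)
  have hc : 0 < c := lt_min hα.1 (sub_pos.2 hα.2)
  have hbound : ∀ t, c * ‖charFun P t - charFun Q t‖ ^ 2 ≤
      α * (a t - b t) ^ 2 + 2 * (1 - α) * a t * b t * (1 - Real.cos (θP t - θQ t)) := by
    intro t
    rw [charFun_eq_integral_exp_I_mul, charFun_eq_integral_exp_I_mul, haP, hbQ]
    exact min_mul_norm_ofReal_mul_exp_sub_sq_le (ha0 t) (hb0 t) α _ _
  have hminorant : ∫⁻ t, ENNReal.ofReal (c * ‖charFun P t - charFun Q t‖ ^ 2) ∂μ = 0 :=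
    le_antisymm (hzero ▸ lintegral_mono fun t => ENNReal.ofReal_le_ofReal (hbound t)) bot_le
  have : μ.IsOpenPosMeasure := hμ ▸ isOpenPosMeasure_withDensity_ofReal volume hp hpm
  have hcont : Continuous fun t => ENNReal.ofReal (c * ‖charFun P t - charFun Q t‖ ^ 2) :=
    ENNReal.continuous_ofReal.comp (by fun_prop)
  rw [hcont.lintegral_eq_zero_iff μ] at hminorant
  refine Measure.ext_of_charFun (funext fun t => sub_eq_zero.1 ?_)
  have ht := congrFun hminorant t
  simp only [Pi.zero_apply, ENNReal.ofReal_eq_zero] at ht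
  exact norm_eq_zero.1 (pow_eq_zero_iff two_ne_zero |>.1
    (le_antisymm (nonpos_of_mul_nonpos_right ht hc) (by positivity)))
end

section
/- Let k(x,y) = exp(−‖x−y‖²/(2σ²)) be the Gaussian kernel on ℝ^d and let P, Q be probability measures with all moments finite and sufficiently integrable for term-by-term integration. Define weighted moments m_{P,α} = E_{X∼P}[X^α exp(−‖X‖²/(2σ²))] and similarly m_{Q,α}. Then MMD²(P,Q) = Σ_{α ∈ ℕ^d} (1/(α! σ^{2|α|})) (m_{P,α} − m_{Q,α})², so that MMD²(P,Q) = 0 implies m_{P,α} = m_{Q,α} for all multi-indices α, and any single differing weighted moment forces MMD²(P,Q) > 0. -/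
/-! Since `‖x - y‖² = ‖x‖² - 2⟪x, y⟫ + ‖y‖²`, the kernel factors as `e(x) e(y) exp(⟪x, y⟫ / σ²)`
with `e(x) = exp(-‖x‖² / (2σ²))`. Expanding `exp(⟪x, y⟫ / σ²) = ∏ᵢ exp(xᵢ yᵢ / σ²)` as a product of
exponential series gives `k(x, y) = ∑_α w_α φ_α(x) φ_α(y)` with `φ_α(x) = x^α e(x)` and
`w_α = 1 / (α! σ^{2|α|}) > 0`. The series of absolute values is the same expansion at the points
`(|x|, |y|)` (coordinatewise absolute values), so it sums to `k(|x|, |y|) ≤ 1`; dominated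
convergence then integrates term by term against `P ⊗ Q`, and the three double integrals of
`MMD²` combine into `∑_α w_α (m_{P,α} - m_{Q,α})²`, a series of nonnegative terms. -/

open MeasureTheory

theorem hasSum_pi_prod_of_summable_abs {κ : Type*} {d : ℕ} (f : Fin d → κ → ℝ)
    (hf : ∀ i, Summable fun n => |f i n|) :
    HasSum (fun α : Fin d → κ => ∏ i, f i (α i)) (∏ i, ∑' n, f i n) := by
  induction d with
  | zero => simp
  | succ d ih =>
    have hhead : HasSum (f 0) (∑' n, f 0 n) := (hf 0).of_abs.hasSum
    have htail := ih (fun i => f i.succ) fun i => hf i.succ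
    have htail_abs := ih (fun i n => |f i.succ n|) fun i => by simpa using hf i.succ
    have hhead_norm : Summable fun n => ‖f 0 n‖ := hf 0
    have htail_norm : Summable fun α : Fin d → κ => ‖∏ i, f i.succ (α i)‖ := by
      simpa [Real.norm_eq_abs, Finset.abs_prod] using htail_abs.summable
    have hsum := summable_mul_of_summable_norm hhead_norm htail_norm
    have hprod := hhead.mul htail hsum
    rw [← (Fin.consEquiv fun _ => κ).hasSum_iff, Fin.prod_univ_succ]
    simpa [Fin.consEquiv, Fin.prod_univ_succ, Function.comp_def] using hprod

theorem eq_of_hasSum_mul_sub_sq_zero {ι : Type*} {c a b : ι → ℝ} (hc : ∀ i, 0 < c i)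
    (h : HasSum (fun i => c i * (a i - b i) ^ 2) 0) (i : ι) : a i = b i := by
  have := congrFun ((hasSum_zero_iff_of_nonneg fun j => mul_nonneg (hc j).le (sq_nonneg _)).1 h) i
  simpa [(hc i).ne', sub_eq_zero] using this

namespace GaussianKernel

variable {E : Type*} {d : ℕ} {σ : ℝ}

noncomputable def kernel [NormedAddCommGroup E] (σ : ℝ) (x y : E) : ℝ :=
  Real.exp (-‖x - y‖ ^ 2 / (2 * σ ^ 2))

noncomputable def weight (σ : ℝ) (α : Fin d → ℕ) : ℝ :=
  1 / ((∏ i, ((α i).factorial : ℝ)) * σ ^ (2 * ∑ i, α i))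

noncomputable def feature (σ : ℝ) (α : Fin d → ℕ) (x : EuclideanSpace ℝ (Fin d)) : ℝ :=
  (∏ i, x i ^ α i) * Real.exp (-‖x‖ ^ 2 / (2 * σ ^ 2))

theorem weight_pos (hσ : σ ≠ 0) (α : Fin d → ℕ) : 0 < weight σ α := by
  rw [weight, pow_mul]; positivity

theorem hasSum_weight_mul_prod_pow (hσ : σ ≠ 0) (t : Fin d → ℝ) :
    HasSum (fun α => weight σ α * ∏ i, t i ^ α i) (Real.exp ((∑ i, t i) / σ ^ 2)) := by
  have hexp (r : ℝ) : HasSum (fun n : ℕ => r ^ n / (n.factorial : ℝ)) (Real.exp r) := by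
    rw [Real.exp_eq_exp_ℝ]; exact NormedSpace.expSeries_div_hasSum_exp r
  have h := hasSum_pi_prod_of_summable_abs
    (fun i (n : ℕ) => (t i / σ ^ 2) ^ n / (n.factorial : ℝ)) fun i =>
      (hexp |t i / σ ^ 2|).summable.congr fun n => by rw [abs_div (_ ^ n), abs_pow, Nat.abs_cast]
  have hterm (α : Fin d → ℕ) :
      ∏ i, (t i / σ ^ 2) ^ α i / ((α i).factorial : ℝ) = weight σ α * ∏ i, t i ^ α i := by
    simp only [weight, div_pow, Finset.prod_div_distrib, Finset.prod_pow_eq_pow_sum, pow_mul]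
    field_simp
  have hsum :
      ∏ i, ∑' n, (t i / σ ^ 2) ^ n / (n.factorial : ℝ) = Real.exp ((∑ i, t i) / σ ^ 2) := by
    rw [Finset.sum_div, Real.exp_sum]
    exact Finset.prod_congr rfl fun i _ => (hexp _).tsum_eq
  rwa [funext hterm, hsum] at h

theorem kernel_eq_mul_exp_inner [NormedAddCommGroup E] [InnerProductSpace ℝ E]
    (hσ : σ ≠ 0) (x y : E) :
    kernel σ x y = Real.exp (-‖x‖ ^ 2 / (2 * σ ^ 2)) * Real.exp (-‖y‖ ^ 2 / (2 * σ ^ 2)) *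
      Real.exp (inner ℝ x y / σ ^ 2) := by
  rw [kernel, ← Real.exp_add, ← Real.exp_add, norm_sub_sq_real]
  congr 1
  field_simp
  ring

theorem hasSum_weight_mul_feature_mul_feature (hσ : σ ≠ 0) (x y : EuclideanSpace ℝ (Fin d)) :
    HasSum (fun α => weight σ α * (feature σ α x * feature σ α y)) (kernel σ x y) := by
  have h := (hasSum_weight_mul_prod_pow hσ fun i => x i * y i).mul_left
    (Real.exp (-‖x‖ ^ 2 / (2 * σ ^ 2)) * Real.exp (-‖y‖ ^ 2 / (2 * σ ^ 2)))
  have hterm (α : Fin d → ℕ) : Real.exp (-‖x‖ ^ 2 / (2 * σ ^ 2)) *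
      Real.exp (-‖y‖ ^ 2 / (2 * σ ^ 2)) * (weight σ α * ∏ i, (x i * y i) ^ α i) =
      weight σ α * (feature σ α x * feature σ α y) := by
    simp only [feature, mul_pow, Finset.prod_mul_distrib]; ring
  have hinner : inner ℝ x y = ∑ i, x i * y i := by simp [PiLp.inner_apply, mul_comm]
  rwa [funext hterm, ← hinner, ← kernel_eq_mul_exp_inner hσ] at h

theorem kernel_pos [NormedAddCommGroup E] (σ : ℝ) (x y : E) : 0 < kernel σ x y :=
  Real.exp_pos _

theorem kernel_le_one [NormedAddCommGroup E] (σ : ℝ) (x y : E) : kernel σ x y ≤ 1 :=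
  Real.exp_le_one_iff.2 <| div_nonpos_of_nonpos_of_nonneg (by simp) (by positivity)

theorem integrable_kernel_comp [NormedAddCommGroup E] {X : Type*} [TopologicalSpace X]
    [MeasurableSpace X] [OpensMeasurableSpace X] (μ : Measure X) [IsFiniteMeasure μ] {u v : X → E}
    (hu : Continuous u) (hv : Continuous v) :
    Integrable (fun z => kernel σ (u z) (v z)) μ := by
  have hcont : Continuous fun z => kernel σ (u z) (v z) := by unfold kernel; fun_prop
  refine Integrable.of_bound hcont.aestronglyMeasurable 1 (ae_of_all _ fun z => ?_)
  rw [Real.norm_of_nonneg (kernel_pos σ _ _).le]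
  exact kernel_le_one σ _ _

def coordAbs (x : EuclideanSpace ℝ (Fin d)) : EuclideanSpace ℝ (Fin d) :=
  WithLp.toLp 2 fun i => |x i|

@[simp]
theorem coordAbs_apply (x : EuclideanSpace ℝ (Fin d)) (i : Fin d) : coordAbs x i = |x i| := rfl

theorem continuous_coordAbs : Continuous (coordAbs (d := d)) := by
  unfold coordAbs; fun_prop

theorem norm_coordAbs (x : EuclideanSpace ℝ (Fin d)) : ‖coordAbs x‖ = ‖x‖ := by
  simp [coordAbs, EuclideanSpace.norm_eq]

theorem abs_feature (σ : ℝ) (α : Fin d → ℕ) (x : EuclideanSpace ℝ (Fin d)) :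
    |feature σ α x| = feature σ α (coordAbs x) := by
  simp [feature, norm_coordAbs, abs_mul, Finset.abs_prod, abs_pow]

@[fun_prop]
theorem continuous_feature (σ : ℝ) (α : Fin d → ℕ) : Continuous (feature σ α) := by
  unfold feature; fun_prop

theorem hasSum_integral_integral (hσ : σ ≠ 0)
    (R S : Measure (EuclideanSpace ℝ (Fin d))) [IsFiniteMeasure R] [IsFiniteMeasure S] :
    HasSum (fun α => weight σ α * ((∫ x, feature σ α x ∂ R) * ∫ y, feature σ α y ∂ S))
      (∫ x, ∫ y, kernel σ x y ∂ S ∂ R) := by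
  let F (α : Fin d → ℕ) (z : EuclideanSpace ℝ (Fin d) × EuclideanSpace ℝ (Fin d)) : ℝ :=
    weight σ α * (feature σ α z.1 * feature σ α z.2)
  have hF_cont (α) : Continuous (F α) := by fun_prop
  have hF_abs (α) (z) : ‖F α z‖ = F α (coordAbs z.1, coordAbs z.2) := by
    simp only [F, Real.norm_eq_abs, abs_mul, abs_feature, abs_of_pos (weight_pos hσ α)]
  have hbound_tsum :
      (fun z : EuclideanSpace ℝ (Fin d) × EuclideanSpace ℝ (Fin d) =>
        ∑' α, F α (coordAbs z.1, coordAbs z.2)) =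
      fun z => kernel σ (coordAbs z.1) (coordAbs z.2) :=
    funext fun z => (hasSum_weight_mul_feature_mul_feature hσ _ _).tsum_eq
  have h := hasSum_integral_of_dominated_convergence (μ := R.prod S) (F := F)
    (f := fun z => kernel σ z.1 z.2) (fun α z => F α (coordAbs z.1, coordAbs z.2))
    (fun α => (hF_cont α).aestronglyMeasurable) (fun α => ae_of_all _ fun z => (hF_abs α z).le)
    (ae_of_all _ fun z => (hasSum_weight_mul_feature_mul_feature hσ _ _).summable)
    (hbound_tsum ▸ integrable_kernel_comp _ (continuous_coordAbs.comp continuous_fst)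
      (continuous_coordAbs.comp continuous_snd))
    (ae_of_all _ fun z => hasSum_weight_mul_feature_mul_feature hσ z.1 z.2)
  rw [integral_integral (integrable_kernel_comp _ continuous_fst continuous_snd)]
  simpa only [F, integral_const_mul, integral_prod_mul] using h

end GaussianKernel

theorem stmt_19_general {d : ℕ} (σ : ℝ) (hσ : 0 < σ)
    (P Q : Measure (EuclideanSpace ℝ (Fin d)))
    [IsProbabilityMeasure P] [IsProbabilityMeasure Q] :
    let k : EuclideanSpace ℝ (Fin d) → EuclideanSpace ℝ (Fin d) → ℝ :=
      fun x y => Real.exp (-‖x - y‖ ^ 2 / (2 * σ ^ 2))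
    let m : Measure (EuclideanSpace ℝ (Fin d)) → (Fin d → ℕ) → ℝ :=
      fun R α => ∫ x, (∏ i, x i ^ α i) * Real.exp (-‖x‖ ^ 2 / (2 * σ ^ 2)) ∂ R
    let mmd2 : ℝ :=
      (∫ x, ∫ x', k x x' ∂P ∂P) - 2 * (∫ x, ∫ y, k x y ∂Q ∂P)
        + (∫ y, ∫ y', k y y' ∂Q ∂Q)
    (mmd2 = ∑' α : Fin d → ℕ,
        (1 / ((∏ i, (Nat.factorial (α i) : ℝ)) * σ ^ (2 * ∑ i, α i))) *
          (m P α - m Q α) ^ 2) ∧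
      (mmd2 = 0 → ∀ α : Fin d → ℕ, m P α = m Q α) ∧
      ((∃ α : Fin d → ℕ, m P α ≠ m Q α) → 0 < mmd2) := by
  intro k m mmd2
  have hPP := GaussianKernel.hasSum_integral_integral hσ.ne' P P
  have hPQ := GaussianKernel.hasSum_integral_integral hσ.ne' P Q
  have hQQ := GaussianKernel.hasSum_integral_integral hσ.ne' Q Q
  have hmmd2 : HasSum (fun α => GaussianKernel.weight σ α * (m P α - m Q α) ^ 2) mmd2 := by
    refine (congrArg (HasSum · mmd2) (funext fun α => ?_)).mpr
      ((hPP.sub (hPQ.mul_left 2)).add hQQ)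
    simp only [m, GaussianKernel.feature]
    ring
  have hzero (h0 : mmd2 = 0) : ∀ α, m P α = m Q α :=
    eq_of_hasSum_mul_sub_sq_zero (GaussianKernel.weight_pos hσ.ne') (h0 ▸ hmmd2)
  refine ⟨hmmd2.tsum_eq.symm, hzero, fun ⟨α, hα⟩ => ?_⟩
  have hnonneg : 0 ≤ mmd2 :=
    hmmd2.nonneg fun α => mul_nonneg (GaussianKernel.weight_pos hσ.ne' α).le (sq_nonneg _)
  exact hnonneg.lt_of_ne fun h0 => hα (hzero h0.symm α)

/-- Moment expansion of the Gaussian-kernel squared MMD: it is a positively weighted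
sum of squared differences of exponentially weighted moments; hence it vanishes iff
all weighted moments agree, and any differing weighted moment forces it positive. -/
theorem stmt_19 {d : ℕ} (σ : ℝ) (hσ : 0 < σ)
    (P Q : Measure (EuclideanSpace ℝ (Fin d)))
    [IsProbabilityMeasure P] [IsProbabilityMeasure Q]
    (hP : ∀ n : ℕ, Integrable (fun x => ‖x‖ ^ n) P)
    (hQ : ∀ n : ℕ, Integrable (fun x => ‖x‖ ^ n) Q) :
    let k : EuclideanSpace ℝ (Fin d) → EuclideanSpace ℝ (Fin d) → ℝ :=
      fun x y => Real.exp (-‖x - y‖ ^ 2 / (2 * σ ^ 2))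
    let m : Measure (EuclideanSpace ℝ (Fin d)) → (Fin d → ℕ) → ℝ :=
      fun R α => ∫ x, (∏ i, x i ^ α i) * Real.exp (-‖x‖ ^ 2 / (2 * σ ^ 2)) ∂ R
    let mmd2 : ℝ :=
      (∫ x, ∫ x', k x x' ∂P ∂P) - 2 * (∫ x, ∫ y, k x y ∂Q ∂P)
        + (∫ y, ∫ y', k y y' ∂Q ∂Q)
    (mmd2 = ∑' α : Fin d → ℕ,
        (1 / ((∏ i, (Nat.factorial (α i) : ℝ)) * σ ^ (2 * ∑ i, α i))) *
          (m P α - m Q α) ^ 2) ∧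
      (mmd2 = 0 → ∀ α : Fin d → ℕ, m P α = m Q α) ∧
      ((∃ α : Fin d → ℕ, m P α ≠ m Q α) → 0 < mmd2) :=
  stmt_19_general σ hσ P Q
end
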